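/- Suppose ω ∈ (0, 1) satisfies the error bound ω · dist(z, S) ≤ dist(z, M) for all z with ‖z‖₁ ≤ r̄, where S := {x ∈ M : ‖x‖₁ = r̄}. Then the displacement vectors d^k := z^k − x^k generated by the BP-MAP algorithm satisfy ‖d^{k+1}‖₂ ≤ (1 − ω/√n)‖d^k‖₂ for every k ≥ 0, so (d^k) converges to 0 linearly with rate no worse than 1 − ω/√n. -/

import Mathlib

open Filter Topology

noncomputable def norm1 {n : ℕ} (x : EuclideanSpace ℝ (Fin n)) : ℝ := ∑ i, |x i|

lemma norm1_nonneg {n : ℕ} (x : EuclideanSpace ℝ (Fin n)) : 0 ≤ norm1 x :=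
  Finset.sum_nonneg fun i _ => abs_nonneg _

lemma norm_le_norm1 {n : ℕ} (x : EuclideanSpace ℝ (Fin n)) : ‖x‖ ≤ norm1 x := by
  rw [EuclideanSpace.norm_eq]
  calc Real.sqrt (∑ i, ‖x i‖ ^ 2) ≤ Real.sqrt ((∑ i, ‖x i‖) ^ 2) :=
        Real.sqrt_le_sqrt (Finset.sum_sq_le_sq_sum_of_nonneg fun i _ => norm_nonneg _)
    _ = ∑ i, ‖x i‖ := Real.sqrt_sq (Finset.sum_nonneg fun i _ => norm_nonneg _)
    _ = norm1 x := by simp [norm1, Real.norm_eq_abs]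

lemma norm1_le_sqrt_mul_norm {n : ℕ} (x : EuclideanSpace ℝ (Fin n)) :
    norm1 x ≤ Real.sqrt n * ‖x‖ := by
  rw [EuclideanSpace.norm_eq]
  have h2 : (∑ i, |x i|) ^ 2 ≤ (n : ℝ) * ∑ i, |x i| ^ 2 := by
    simpa using sq_sum_le_card_mul_sum_sq (s := Finset.univ) (f := fun i => |x i|)
  have h3 : norm1 x = Real.sqrt ((∑ i, |x i|) ^ 2) :=
    (Real.sqrt_sq (norm1_nonneg x)).symm
  rw [norm1] at *
  rw [h3, ← Real.sqrt_mul (by positivity)]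
  apply Real.sqrt_le_sqrt
  simpa [Real.norm_eq_abs] using h2

lemma norm1_add_le {n : ℕ} (u v : EuclideanSpace ℝ (Fin n)) :
    norm1 (u + v) ≤ norm1 u + norm1 v := by
  rw [norm1, norm1, norm1, ← Finset.sum_add_distrib]
  exact Finset.sum_le_sum fun i _ => by
    simpa using abs_add_le (u i) (v i)

lemma norm1_smul {n : ℕ} (a : ℝ) (x : EuclideanSpace ℝ (Fin n)) :
    norm1 (a • x) = |a| * norm1 x := by
  simp [norm1, abs_mul, Finset.mul_sum]

lemma continuous_norm1 {n : ℕ} : Continuous (norm1 (n := n)) := by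
  apply continuous_finset_sum
  intro i _
  exact ((EuclideanSpace.proj i).continuous.norm).congr (by simp [Real.norm_eq_abs])

lemma exists_norm1_min {n m : ℕ} (A : Matrix (Fin m) (Fin n) ℝ) (b : Fin m → ℝ)
    (M : Set (EuclideanSpace ℝ (Fin n))) (hM : M = {x : EuclideanSpace ℝ (Fin n) | A.mulVec (WithLp.ofLp x) = b})
    (hMne : M.Nonempty) : ∃ u ∈ M, ∀ v ∈ M, norm1 u ≤ norm1 v := by
  obtain ⟨x₀, hx₀⟩ := hMne
  have hMclosed : IsClosed M := by
    set L : EuclideanSpace ℝ (Fin n) →ₗ[ℝ] (Fin m → ℝ) :=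
      A.mulVecLin ∘ₗ (WithLp.linearEquiv 2 ℝ (Fin n → ℝ)).toLinearMap with hL
    have hcont : Continuous L := L.continuous_of_finiteDimensional
    have : M = L ⁻¹' {b} := by
      rw [hM]; ext v
      simp only [hL, Set.mem_preimage, Set.mem_singleton_iff, Set.mem_setOf_eq,
        LinearMap.coe_comp, Function.comp_apply, Matrix.mulVecLin_apply]
      exact Iff.rfl
    rw [this]
    exact isClosed_singleton.preimage hcont
  set K : Set (EuclideanSpace ℝ (Fin n)) := M ∩ {v | norm1 v ≤ norm1 x₀} with hK
  have hKclosed : IsClosed K :=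
    hMclosed.inter (isClosed_Iic.preimage continuous_norm1)
  have hKsub : K ⊆ Metric.closedBall 0 (norm1 x₀) := by
    intro v hv
    rw [Metric.mem_closedBall, dist_zero_right]
    exact le_trans (norm_le_norm1 v) hv.2
  have hKcompact : IsCompact K :=
    (isCompact_closedBall (0 : EuclideanSpace ℝ (Fin n)) (norm1 x₀)).of_isClosed_subset
      hKclosed hKsub
  have hKne : K.Nonempty := ⟨x₀, hx₀, show norm1 x₀ ≤ norm1 x₀ from le_refl _⟩
  obtain ⟨u, huK, hmin⟩ := hKcompact.exists_isMinOn hKne continuous_norm1.continuousOn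
  refine ⟨u, huK.1, fun v hv => ?_⟩
  by_cases h : norm1 v ≤ norm1 x₀
  · exact hmin ⟨hv, h⟩
  · exact le_trans (hmin ⟨hx₀, show norm1 x₀ ≤ norm1 x₀ from le_refl _⟩) (le_of_not_ge h)

/-- Under the error bound with constant ω ∈ (0,1), the displacement
vectors satisfy ‖d^{k+1}‖₂ ≤ (1 − ω/√n)‖d^k‖₂ for every k. -/
theorem bpmap_displacement_linear_rate {n m : ℕ} (hn : 1 ≤ n)
    (A : Matrix (Fin m) (Fin n) ℝ) (b : Fin m → ℝ)
    (M : Set (EuclideanSpace ℝ (Fin n)))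
    (hM : M = {x : EuclideanSpace ℝ (Fin n) | A.mulVec (WithLp.ofLp x) = b})
    (hMne : M.Nonempty)
    (rbar : ℝ) (hrbar : rbar = sInf (norm1 '' M))
    (r : ℕ → ℝ) (z x : ℕ → EuclideanSpace ℝ (Fin n))
    (hr0 : r 0 = 0) (hz0 : z 0 = 0)
    (hxM : ∀ k, x k ∈ M)
    (hzB : ∀ k, norm1 (z k) ≤ r k)
    (hbap : ∀ k, ∀ y ∈ M, ∀ w : EuclideanSpace ℝ (Fin n),
      norm1 w ≤ r k → dist (z k) (x k) ≤ dist w y)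
    (hrrec : ∀ k, r (k + 1) = r k + dist (z k) (x k))
    (S : Set (EuclideanSpace ℝ (Fin n)))
    (hS : S = {u ∈ M | norm1 u = rbar})
    (ω : ℝ) (hω0 : 0 < ω) (hω1 : ω < 1)
    (hEB : ∀ u : EuclideanSpace ℝ (Fin n), norm1 u ≤ rbar →
      ω * Metric.infDist u S ≤ Metric.infDist u M) :
    ∀ k, ‖z (k + 1) - x (k + 1)‖ ≤ (1 - ω / Real.sqrt n) * ‖z k - x k‖ := by
  -- a minimizer of norm1 on M
  obtain ⟨s, hsM, hsmin⟩ := exists_norm1_min A b M hM hMne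
  have hbdd : BddBelow (norm1 '' M) := ⟨0, by rintro y ⟨v, hv, rfl⟩; exact norm1_nonneg v⟩
  have hs_rbar : norm1 s = rbar := by
    rw [hrbar]
    refine le_antisymm (le_csInf (hMne.image _) ?_) (csInf_le hbdd ⟨s, hsM, rfl⟩)
    rintro y ⟨v, hv, rfl⟩
    exact hsmin v hv
  have hsS : s ∈ S := by rw [hS]; exact ⟨hsM, hs_rbar⟩
  have hrbar0 : 0 ≤ rbar := hs_rbar ▸ norm1_nonneg s
  -- the gap bound
  have key : ∀ j, 0 ≤ r j → r j ≤ rbar → dist (z j) (x j) ≤ rbar - r j := by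
    intro j hj0 hjle
    rcases eq_or_lt_of_le hrbar0 with h0 | hpos
    · have hrj : r j = 0 := le_antisymm (h0 ▸ hjle) hj0
      have h1 : dist (z j) (x j) ≤ dist s s :=
        hbap j s hsM s (by rw [hs_rbar, ← h0, hrj])
      simpa [hrj, ← h0] using h1
    · set c := r j / rbar with hc
      have hc0 : 0 ≤ c := div_nonneg hj0 hrbar0
      have hc1 : c ≤ 1 := (div_le_one hpos).mpr hjle
      have hw : norm1 (c • s) = r j := by
        rw [norm1_smul, abs_of_nonneg hc0, hs_rbar, hc, div_mul_cancel₀ _ hpos.ne']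
      have h1 : dist (z j) (x j) ≤ dist (c • s) s := hbap j s hsM (c • s) (le_of_eq hw)
      have h2 : dist (c • s) s = (1 - c) * ‖s‖ := by
        rw [dist_eq_norm]
        have : c • s - s = (c - 1) • s := by rw [sub_smul, one_smul]
        rw [this, norm_smul, Real.norm_eq_abs, abs_of_nonpos (by linarith), neg_sub]
      have h3 : (1 - c) * ‖s‖ ≤ (1 - c) * norm1 s :=
        mul_le_mul_of_nonneg_left (norm_le_norm1 s) (by linarith)
      have h4 : (1 - c) * norm1 s = rbar - r j := by
        rw [hs_rbar, hc]; field_simp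
      linarith
  have hrbounds : ∀ j, 0 ≤ r j ∧ r j ≤ rbar := by
    intro j
    induction j with
    | zero => exact ⟨le_of_eq hr0.symm, hr0 ▸ hrbar0⟩
    | succ j ih =>
      have hk := key j ih.1 ih.2
      have hd : (0:ℝ) ≤ dist (z j) (x j) := dist_nonneg
      constructor
      · rw [hrrec]; linarith [ih.1]
      · rw [hrrec]; linarith [ih.2]
  -- sqrt facts
  have hn1 : (1:ℝ) ≤ (n:ℝ) := by exact_mod_cast hn
  have hsq1 : (1:ℝ) ≤ Real.sqrt n := by
    rw [show (1:ℝ) = Real.sqrt 1 by simp]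
    exact Real.sqrt_le_sqrt hn1
  have hsqpos : (0:ℝ) < Real.sqrt n := lt_of_lt_of_le one_pos hsq1
  intro k
  have hD0 : (0:ℝ) ≤ dist (z k) (x k) := dist_nonneg
  obtain ⟨hrk0, hrkle⟩ := hrbounds k
  rcases eq_or_lt_of_le hD0 with hDz | hDpos
  · -- displacement is zero
    have h1 : dist (z (k+1)) (x (k+1)) ≤ dist (z k) (x k) :=
      hbap (k+1) (x k) (hxM k) (z k) (by rw [hrrec k]; linarith [hzB k])
    have hzz : ‖z k - x k‖ = 0 := by rw [← dist_eq_norm]; linarith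
    rw [hzz, mul_zero, ← dist_eq_norm]
    calc dist (z (k+1)) (x (k+1)) ≤ dist (z k) (x k) := h1
      _ = 0 := hDz.symm
      _ ≤ 0 := le_refl 0
  · set D := dist (z k) (x k) with hD
    have hgap : D ≤ rbar - r k := key k hrk0 hrkle
    have hlt : r k < rbar := by linarith
    have hinfM : Metric.infDist (z k) M ≤ D := Metric.infDist_le_dist_of_mem (hxM k)
    have hEBk : ω * Metric.infDist (z k) S ≤ D :=
      le_trans (hEB (z k) (le_trans (hzB k) hrkle)) hinfM
    have hSne : S.Nonempty := ⟨s, hsS⟩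
    have hgap2 : rbar - r k ≤ Real.sqrt n * Metric.infDist (z k) S := by
      rw [← div_le_iff₀' hsqpos]
      by_contra hcon
      push_neg at hcon
      obtain ⟨s', hs', hds'⟩ := (Metric.infDist_lt_iff hSne).mp hcon
      rw [hS] at hs'
      obtain ⟨hs'M, hs'n⟩ := hs'
      have h1 : rbar - r k ≤ norm1 (s' - z k) := by
        have h5 := norm1_add_le (s' - z k) (z k)
        simp only [sub_add_cancel] at h5
        rw [hs'n] at h5
        have h2 := hzB k
        linarith
      have h3 : norm1 (s' - z k) ≤ Real.sqrt n * ‖s' - z k‖ := norm1_le_sqrt_mul_norm _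
      have h4 : dist (z k) s' = ‖s' - z k‖ := by rw [dist_eq_norm, norm_sub_rev]
      rw [h4, lt_div_iff₀ hsqpos] at hds'
      nlinarith
    have hratio : ω / Real.sqrt n ≤ D / (rbar - r k) := by
      rw [div_le_div_iff₀ hsqpos (by linarith)]
      have hinfS0 : 0 ≤ Metric.infDist (z k) S := Metric.infDist_nonneg
      calc ω * (rbar - r k) ≤ ω * (Real.sqrt n * Metric.infDist (z k) S) :=
            mul_le_mul_of_nonneg_left hgap2 hω0.le
        _ = Real.sqrt n * (ω * Metric.infDist (z k) S) := by ring
        _ ≤ Real.sqrt n * D := mul_le_mul_of_nonneg_left hEBk hsqpos.le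
        _ = D * Real.sqrt n := mul_comm _ _
    set t := D / (rbar - r k) with ht
    have ht0 : 0 ≤ t := div_nonneg hD0 (by linarith)
    have ht1 : t ≤ 1 := (div_le_one (by linarith)).mpr hgap
    have htr : t * (rbar - r k) = D := div_mul_cancel₀ _ (by linarith)
    set w := (1 - t) • z k + t • s with hwdef
    set y := (1 - t) • x k + t • s with hydef
    have hyM : y ∈ M := by
      have hx' : A.mulVec (WithLp.ofLp (x k)) = b := by have := hxM k; rwa [hM] at this
      have hs' : A.mulVec (WithLp.ofLp s) = b := by have := hsM; rwa [hM] at this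
      rw [hM]
      show A.mulVec (WithLp.ofLp ((1 - t) • x k + t • s)) = b
      rw [WithLp.ofLp_add, WithLp.ofLp_smul, WithLp.ofLp_smul, Matrix.mulVec_add, Matrix.mulVec_smul, Matrix.mulVec_smul, hx', hs',
        ← add_smul]
      simp
    have hwB : norm1 w ≤ r (k+1) := by
      calc norm1 w ≤ norm1 ((1 - t) • z k) + norm1 (t • s) := norm1_add_le _ _
        _ = (1 - t) * norm1 (z k) + t * norm1 s := by
            rw [norm1_smul, norm1_smul, abs_of_nonneg (by linarith : (0:ℝ) ≤ 1 - t),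
              abs_of_nonneg ht0]
        _ ≤ (1 - t) * r k + t * rbar := by
            have := mul_le_mul_of_nonneg_left (hzB k) (by linarith : (0:ℝ) ≤ 1 - t)
            rw [hs_rbar]; linarith
        _ = r k + t * (rbar - r k) := by ring
        _ = r k + D := by rw [htr]
        _ = r (k+1) := (hrrec k).symm
    have hfinal := hbap (k+1) y hyM w hwB
    have hwy : dist w y = (1 - t) * D := by
      rw [dist_eq_norm]
      have hsub : w - y = (1 - t) • (z k - x k) := by
        rw [hwdef, hydef, smul_sub]; abel
      rw [hsub, norm_smul, Real.norm_eq_abs, abs_of_nonneg (by linarith : (0:ℝ) ≤ 1 - t),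
        hD, dist_eq_norm]
    have hcmp : (1 - t) * D ≤ (1 - ω / Real.sqrt n) * D :=
      mul_le_mul_of_nonneg_right (by linarith) hD0
    rw [← dist_eq_norm, ← dist_eq_norm, ← hD]
    linarith [hwy ▸ hfinal]
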